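/- arXiv:1508.07199 — 2 statements merged into one kernel-verified Lean document; each statement's English description precedes it below -/
import Mathlib

section
/- Let a₁, a₂ ∈ ℂ. There exists a holomorphic function f : 𝔻 → ℂ with sup_{z∈𝔻}|f(z)| ≤ 1, f(0) = 0, f′(0) = a₁, and f″(0) = 2a₂ if and only if |a₁|² + |a₂| ≤ 1. -/
/-!
Writing `f z = z * g z`, the Schwarz lemma turns the problem into: a holomorphic
`g : 𝔻 → closedBall 0 1` with `g 0 = a₁` and `g' 0 = a₂` exists iff `‖a₂‖ ≤ 1 - ‖a₁‖²`.
Necessity is the Schwarz–Pick inequality at `0`: compose `g` with the Blaschke factor sending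
`a₁` to `0` and apply the Schwarz lemma (if `‖a₁‖ = 1`, `g` is constant by the maximum modulus
principle). Sufficiency is witnessed by `g z = B₋ₐ₁ (a₂ z / (1 - ‖a₁‖²))`.
-/

open Metric Set Complex ComplexConjugate

/-- Where `conj a * w = 1` the division returns `0`, so bounds on `blaschkeFactor` need no
hypothesis on the denominator. -/
noncomputable def blaschkeFactor (a w : ℂ) : ℂ := (w - a) / (1 - conj a * w)

@[simp]
lemma blaschkeFactor_self (a : ℂ) : blaschkeFactor a a = 0 := by
  simp [blaschkeFactor]

@[simp]
lemma blaschkeFactor_zero_right (a : ℂ) : blaschkeFactor a 0 = -a := by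
  simp [blaschkeFactor]

lemma norm_one_sub_conj_mul_sq_sub_norm_sub_sq (a w : ℂ) :
    ‖1 - conj a * w‖ ^ 2 - ‖w - a‖ ^ 2 = (1 - ‖a‖ ^ 2) * (1 - ‖w‖ ^ 2) := by
  simp only [Complex.sq_norm, normSq_apply, sub_re, sub_im, mul_re, mul_im, one_re, one_im, conj_re,
    conj_im]
  ring

lemma one_sub_conj_mul_ne_zero {a w : ℂ} (h : ‖a‖ * ‖w‖ < 1) : 1 - conj a * w ≠ 0 := by
  intro h0
  have h1 : conj a * w = 1 := by linear_combination -h0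
  have := congrArg norm h1
  simp only [norm_mul, RCLike.norm_conj, norm_one] at this
  linarith

lemma norm_blaschkeFactor_le_one {a w : ℂ} (ha : ‖a‖ ≤ 1) (hw : ‖w‖ ≤ 1) :
    ‖blaschkeFactor a w‖ ≤ 1 := by
  have hsq : ‖w - a‖ ^ 2 ≤ ‖1 - conj a * w‖ ^ 2 := by
    have hprod : 0 ≤ (1 - ‖a‖ ^ 2) * (1 - ‖w‖ ^ 2) :=
      mul_nonneg (sub_nonneg.2 (pow_le_one₀ (norm_nonneg a) ha))
        (sub_nonneg.2 (pow_le_one₀ (norm_nonneg w) hw))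
    linarith [norm_one_sub_conj_mul_sq_sub_norm_sub_sq a w]
  rw [blaschkeFactor, norm_div]
  exact div_le_one_of_le₀ (le_of_pow_le_pow_left₀ two_ne_zero (norm_nonneg _) hsq) (norm_nonneg _)

lemma hasDerivAt_blaschkeFactor {a w : ℂ} (h : 1 - conj a * w ≠ 0) :
    HasDerivAt (blaschkeFactor a) ((1 - ‖a‖ ^ 2) / (1 - conj a * w) ^ 2) w := by
  have := ((hasDerivAt_id' w).sub_const a).fun_div
    (((hasDerivAt_id' w).const_mul (conj a)).const_sub 1) h
  refine this.congr_deriv ?_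
  rw [← mul_conj']
  ring

lemma norm_deriv_le_one_sub_sq_of_mapsTo_ball {g : ℂ → ℂ}
    (hd : DifferentiableOn ℂ g (ball 0 1)) (hg : MapsTo g (ball 0 1) (closedBall 0 1)) :
    ‖deriv g 0‖ ≤ 1 - ‖g 0‖ ^ 2 := by
  have h0 : (0 : ℂ) ∈ ball (0 : ℂ) 1 := mem_ball_self one_pos
  rcases (mem_closedBall_zero_iff.1 (hg h0)).eq_or_lt with hg0 | hg0
  · have hmax : IsLocalMax (norm ∘ g) 0 :=
      Filter.eventually_of_mem (isOpen_ball.mem_nhds h0) fun z hz =>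
        (mem_closedBall_zero_iff.1 (hg hz)).trans hg0.ge
    have hconst := Complex.eventually_eq_of_isLocalMax_norm
      (hd.eventually_differentiableAt (isOpen_ball.mem_nhds h0)) hmax
    rw [Filter.EventuallyEq.deriv_eq hconst, deriv_const, hg0]
    simp
  · set a := g 0
    have hden : ∀ z ∈ ball (0 : ℂ) 1, 1 - conj a * g z ≠ 0 := fun z hz =>
      one_sub_conj_mul_ne_zero <|
        mul_lt_one_of_nonneg_of_lt_one_left (norm_nonneg a) hg0 (mem_closedBall_zero_iff.1 (hg hz))
    have hr : 0 < 1 - ‖a‖ ^ 2 := by nlinarith [norm_nonneg a]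
    have hderiv : deriv (blaschkeFactor a ∘ g) 0 = deriv g 0 / ((1 - ‖a‖ ^ 2 : ℝ) : ℂ) := by
      have hr' : 1 - (‖a‖ : ℂ) ^ 2 ≠ 0 := by exact_mod_cast hr.ne'
      rw [((hasDerivAt_blaschkeFactor (hden 0 h0)).comp 0
        (hd.differentiableAt (isOpen_ball.mem_nhds h0)).hasDerivAt).deriv, conj_mul']
      push_cast
      field_simp
    have hschwarz : ‖deriv (blaschkeFactor a ∘ g) 0‖ ≤ 1 := by
      refine Complex.norm_deriv_le_one_of_mapsTo_ball ?_ ?_ one_pos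
      · exact fun z hz => (hasDerivAt_blaschkeFactor (hden z hz)).differentiableAt
          |>.comp_differentiableWithinAt z (hd z hz)
      · intro z hz
        simp only [Function.comp_apply, blaschkeFactor_self, a, mem_closedBall_zero_iff]
        exact norm_blaschkeFactor_le_one hg0.le (mem_closedBall_zero_iff.1 (hg hz))
    rwa [hderiv, norm_div, norm_real, Real.norm_of_nonneg hr.le, div_le_one hr] at hschwarz

section MulId

variable {𝕜 : Type*} [NontriviallyNormedField 𝕜] {g : 𝕜 → 𝕜}

lemma deriv_id_mul_zero (hg : DifferentiableAt 𝕜 g 0) : deriv (fun z => z * g z) 0 = g 0 := by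
  rw [((hasDerivAt_id' 0).fun_mul hg.hasDerivAt).deriv]
  simp

lemma deriv_deriv_id_mul_zero [CompleteSpace 𝕜] (hg : AnalyticAt 𝕜 g 0) :
    deriv (deriv fun z => z * g z) 0 = 2 * deriv g 0 := by
  have hev : deriv (fun z => z * g z) =ᶠ[nhds 0] fun z => g z + z * deriv g z := by
    filter_upwards [hg.eventually_analyticAt] with z hz
    rw [((hasDerivAt_id' z).fun_mul hz.differentiableAt.hasDerivAt).deriv]
    ring
  rw [hev.deriv_eq, (hg.differentiableAt.hasDerivAt.fun_add
    ((hasDerivAt_id' 0).fun_mul hg.deriv.differentiableAt.hasDerivAt)).deriv]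
  ring

end MulId

lemma norm_deriv_sq_add_norm_deriv_deriv_div_two_le_one {f : ℂ → ℂ}
    (hd : DifferentiableOn ℂ f (ball 0 1)) (hf : MapsTo f (ball 0 1) (closedBall 0 1))
    (h0 : f 0 = 0) : ‖deriv f 0‖ ^ 2 + ‖deriv (deriv f) 0 / 2‖ ≤ 1 := by
  have h0mem : ball (0 : ℂ) 1 ∈ nhds 0 := isOpen_ball.mem_nhds (mem_ball_self one_pos)
  set g := dslope f 0
  have hfg : f = fun z => z * g z :=
    funext fun z => by simpa [h0] using (sub_smul_dslope f 0 z).symm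
  have hgd : DifferentiableOn ℂ g (ball 0 1) := (differentiableOn_dslope h0mem).2 hd
  have hgmaps : MapsTo g (ball 0 1) (closedBall 0 1) := fun z hz => mem_closedBall_zero_iff.2 <| by
    simpa using Complex.norm_dslope_le_div_of_mapsTo_ball hd (by rwa [h0]) hz
  have hga : AnalyticAt ℂ g 0 := hgd.analyticAt h0mem
  have hpick := norm_deriv_le_one_sub_sq_of_mapsTo_ball hgd hgmaps
  rw [hfg, deriv_id_mul_zero hga.differentiableAt, deriv_deriv_id_mul_zero hga,
    mul_div_cancel_left₀ _ two_ne_zero]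
  linarith

lemma exists_selfMap_ball_of_norm_sq_add_norm_le_one {a₁ a₂ : ℂ} (h : ‖a₁‖ ^ 2 + ‖a₂‖ ≤ 1) :
    ∃ g : ℂ → ℂ, DifferentiableOn ℂ g (ball 0 1) ∧ MapsTo g (ball 0 1) (closedBall 0 1) ∧
      g 0 = a₁ ∧ deriv g 0 = a₂ := by
  set r : ℝ := 1 - ‖a₁‖ ^ 2
  have hr : 0 ≤ r := by linarith [norm_nonneg a₂]
  have ha₁ : ‖a₁‖ ≤ 1 := by nlinarith [norm_nonneg a₁]
  -- For `‖a₁‖ = 1` this is `a₂ / 0 = 0`, which is right since then `a₂ = 0`.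
  set l := a₂ / (r : ℂ)
  have hl : ‖l‖ ≤ 1 := by
    rw [norm_div, norm_real, Real.norm_of_nonneg hr]
    exact div_le_one_of_le₀ (by linarith) hr
  have hlr : l * r = a₂ := by
    rcases hr.eq_or_lt with hr0 | hr0
    · have : a₂ = 0 := norm_le_zero_iff.1 (by linarith)
      simp [l, this]
    · exact div_mul_cancel₀ _ (ofReal_ne_zero.2 hr0.ne')
  have hden : ∀ z ∈ ball (0 : ℂ) 1, 1 - conj (-a₁) * (l * z) ≠ 0 := fun z hz =>
    one_sub_conj_mul_ne_zero <| by
      rw [norm_neg, norm_mul]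
      exact mul_lt_one_of_nonneg_of_lt_one_right ha₁ (by positivity)
        (mul_lt_one_of_nonneg_of_lt_one_right hl (norm_nonneg z) (mem_ball_zero_iff.1 hz))
  have hderiv : ∀ z ∈ ball (0 : ℂ) 1, HasDerivAt (fun z => blaschkeFactor (-a₁) (l * z))
      ((1 - ‖-a₁‖ ^ 2) / (1 - conj (-a₁) * (l * z)) ^ 2 * (l * 1)) z := fun z hz =>
    (hasDerivAt_blaschkeFactor (hden z hz)).comp z ((hasDerivAt_id' z).const_mul l)
  refine ⟨fun z => blaschkeFactor (-a₁) (l * z),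
    fun z hz => (hderiv z hz).differentiableAt.differentiableWithinAt, fun z hz => ?_, by simp, ?_⟩
  · refine mem_closedBall_zero_iff.2 (norm_blaschkeFactor_le_one (by simpa using ha₁) ?_)
    rw [norm_mul]
    exact mul_le_one₀ hl (norm_nonneg z) (mem_ball_zero_iff.1 hz).le
  · rw [(hderiv 0 (mem_ball_self one_pos)).deriv, ← hlr]
    simp only [norm_neg, map_neg, mul_zero, sub_zero, one_pow, div_one, mul_one, ofReal_sub,
      ofReal_one, ofReal_pow, r]
    ring

/-- One-variable Carathéodory–Fejér: there is a holomorphic self-map `f` of the closed unit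
disc data with `f(0) = 0`, `f′(0) = a₁`, `f″(0) = 2a₂` iff `|a₁|² + |a₂| ≤ 1`. -/
theorem stmt3 (a₁ a₂ : ℂ) :
    (∃ f : ℂ → ℂ, DifferentiableOn ℂ f (ball 0 1) ∧
        (∀ z ∈ ball (0 : ℂ) 1, ‖f z‖ ≤ 1) ∧
        f 0 = 0 ∧ deriv f 0 = a₁ ∧ deriv (deriv f) 0 = 2 * a₂) ↔
      ‖a₁‖ ^ 2 + ‖a₂‖ ≤ 1 := by
  constructor
  · rintro ⟨f, hd, hf, h0, rfl, h2⟩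
    simpa [h2] using norm_deriv_sq_add_norm_deriv_deriv_div_two_le_one hd
      (fun z hz => mem_closedBall_zero_iff.2 (hf z hz)) h0
  · intro h
    obtain ⟨g, hgd, hg, rfl, rfl⟩ := exists_selfMap_ball_of_norm_sq_add_norm_le_one h
    have hga : AnalyticAt ℂ g 0 := hgd.analyticAt (isOpen_ball.mem_nhds (mem_ball_self one_pos))
    refine ⟨fun z => z * g z, differentiableOn_id.mul hgd, fun z hz => ?_, by simp,
      deriv_id_mul_zero hga.differentiableAt, deriv_deriv_id_mul_zero hga⟩
    rw [norm_mul]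
    exact mul_le_one₀ (mem_ball_zero_iff.1 hz).le (norm_nonneg _)
      (mem_closedBall_zero_iff.1 (hg hz))
end

section
/- Let θ₁, …, θ_m ∈ [0, 2π). Then there exist complex numbers a₁, a₂ such that max_{j=1,…,m} |a₁ + e^{iθⱼ} a₂| < |a₁| + |a₂|. -/
/-!
Take `a₁ = 1` and `a₂ = w` on the unit circle. By strict convexity of `ℂ`, the triangle
inequality `‖1 + zⱼ w‖ ≤ 2` is strict unless `zⱼ w = 1`, so it suffices to choose `w`
outside the finite set `{zⱼ⁻¹}`, which is possible because the unit circle is infinite.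
-/

theorem Complex.infinite_sphere_zero_one : (Metric.sphere (0 : ℂ) 1).Infinite := by
  refine ((Set.Ico_infinite Real.two_pi_pos).image
    (injOn_circleMap_of_abs_sub_le' (c := 0) one_ne_zero (by rw [sub_zero]))).mono ?_
  rintro _ ⟨t, -, rfl⟩
  simp

theorem Complex.norm_one_add_lt_two {u : ℂ} (hu : ‖u‖ = 1) (hu1 : u ≠ 1) : ‖1 + u‖ < 2 :=
  calc ‖1 + u‖ < ‖(1 : ℂ)‖ + ‖u‖ :=
        norm_add_lt_of_not_sameRay ((not_sameRay_iff_of_norm_eq (by simp [hu])).2 hu1.symm)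
    _ = 2 := by rw [norm_one, hu]; norm_num

theorem Complex.exists_forall_norm_add_mul_lt {ι : Type*} [Finite ι] (z : ι → ℂ)
    (hz : ∀ i, ‖z i‖ = 1) : ∃ a₁ a₂ : ℂ, ∀ i, ‖a₁ + z i * a₂‖ < ‖a₁‖ + ‖a₂‖ := by
  obtain ⟨w, hw, hw_avoid⟩ :=
    (Complex.infinite_sphere_zero_one.sdiff (Set.finite_range fun i ↦ (z i)⁻¹)).nonempty
  rw [mem_sphere_zero_iff_norm] at hw
  refine ⟨1, w, fun i ↦ ?_⟩
  have hzw : z i * w ≠ 1 := fun h ↦ hw_avoid ⟨i, (eq_inv_of_mul_eq_one_right h).symm⟩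
  rw [norm_one, hw, one_add_one_eq_two]
  exact Complex.norm_one_add_lt_two (by rw [norm_mul, hz i, hw, one_mul]) hzw

theorem stmt16_general (m : ℕ) (θ : Fin m → ℝ) :
    ∃ a₁ a₂ : ℂ, ∀ j,
      ‖a₁ + Complex.exp ((θ j : ℂ) * Complex.I) * a₂‖ < ‖a₁‖ + ‖a₂‖ :=
  Complex.exists_forall_norm_add_mul_lt _ fun j ↦ Complex.norm_exp_ofReal_mul_I (θ j)

/-- For finitely many angles `θ₁, …, θ_m ∈ [0, 2π)` there are complex numbers `a₁, a₂`
with `max_j |a₁ + e^{iθⱼ} a₂| < |a₁| + |a₂|`. -/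
theorem stmt16 (m : ℕ) (θ : Fin m → ℝ) (hθ : ∀ j, θ j ∈ Set.Ico 0 (2 * Real.pi)) :
    ∃ a₁ a₂ : ℂ, ∀ j,
      ‖a₁ + Complex.exp ((θ j : ℂ) * Complex.I) * a₂‖ < ‖a₁‖ + ‖a₂‖ :=
  stmt16_general m θ
end
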